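/- If B is a semi-strongly disjoint set of bouquets of a simple hypergraph H with |F(B)| = d'_H (maximum possible), then F(B) is a minimal vertex cover of H of maximum cardinality. -/

import Mathlib

/-!
In a semi-strongly disjoint family `B` every edge meets `F(B)` only in its own flower, so
`F(B)` is a minimal cover as soon as it is a cover. It is a cover: otherwise an uncovered
edge `E` with fewest vertices outside `V(B)` can be added as a one-edge bouquet flowered at
such a vertex, giving a semi-strongly disjoint family with more than `|E(B)| ≥ |F(B)| = d'_H`
edges. Conversely every minimal cover `C` has a private edge at each vertex, and these
edges form a semi-strongly disjoint family of `|C|` one-edge bouquets, so `|C| ≤ d'_H`.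
-/

open Finset

structure SimpleHypergraph (α : Type*) [DecidableEq α] where
  edges : Finset (Finset α)
  nonempty_edges : ∀ E ∈ edges, E.Nonempty
  antichain : ∀ E ∈ edges, ∀ F ∈ edges, E ⊆ F → E = F

namespace SimpleHypergraph

variable {α : Type*} [DecidableEq α]

/-- The vertex set of a simple hypergraph: the union of its edges. -/
def verts (H : SimpleHypergraph α) : Finset α := H.edges.sup id

/-- `C` is a vertex cover: every edge meets `C`. -/
def IsCover (H : SimpleHypergraph α) (C : Finset α) : Prop :=
  ∀ E ∈ H.edges, ∃ v ∈ E, v ∈ C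

/-- `C` is a minimal vertex cover. -/
def IsMinCover (H : SimpleHypergraph α) (C : Finset α) : Prop :=
  H.IsCover C ∧ ∀ D ⊂ C, ¬ H.IsCover D

/-- `A` is independent: it contains no edge. -/
def Indep (H : SimpleHypergraph α) (A : Finset α) : Prop :=
  ∀ E ∈ H.edges, ¬ E ⊆ A

/-- The partial hypergraph of `H` on a vertex subset `U`. -/
def restrict (H : SimpleHypergraph α) (U : Finset α) : SimpleHypergraph α where
  edges := H.edges.filter (· ⊆ U)
  nonempty_edges := fun E hE => H.nonempty_edges E (Finset.mem_filter.mp hE).1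
  antichain := fun E hE F hF h =>
    H.antichain E (Finset.mem_filter.mp hE).1 F (Finset.mem_filter.mp hF).1 h

/-- The maximum cardinality of a minimal vertex cover (big height). -/
noncomputable def alpha0' (H : SimpleHypergraph α) : ℕ :=
  sSup {n : ℕ | ∃ C : Finset α, H.IsMinCover C ∧ n = C.card}

/-- A bouquet of `H`: a partial hypergraph whose edges have a common vertex,
with a designated flower in each edge belonging to no other edge. -/
structure BouquetOf (H : SimpleHypergraph α) where
  edges : Finset (Finset α)
  edges_nonempty : edges.Nonempty
  subset : edges ⊆ H.edges
  core : ∃ v, ∀ E ∈ edges, v ∈ E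
  flower : Finset α → α
  flower_spec : ∀ E ∈ edges, ∀ F ∈ edges, (flower E ∈ F ↔ E = F)

def BouquetOf.flowers {H : SimpleHypergraph α} (B : H.BouquetOf) : Finset α :=
  B.edges.image B.flower

def BouquetOf.verts {H : SimpleHypergraph α} (B : H.BouquetOf) : Finset α :=
  B.edges.sup id

/-- The union of the edge sets of a finite family of bouquets. -/
def famEdges {H : SimpleHypergraph α} {j : ℕ} (B : Fin j → H.BouquetOf) :
    Finset (Finset α) := Finset.univ.sup fun i => (B i).edges

/-- The union of the flower sets of a finite family of bouquets. -/
def famFlowers {H : SimpleHypergraph α} {j : ℕ} (B : Fin j → H.BouquetOf) :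
    Finset α := Finset.univ.sup fun i => (B i).flowers

/-- The union of the vertex sets of a finite family of bouquets. -/
def famVerts {H : SimpleHypergraph α} {j : ℕ} (B : Fin j → H.BouquetOf) :
    Finset α := Finset.univ.sup fun i => (B i).verts

/-- A semi-strongly disjoint family of bouquets of `H`. -/
def SSD (H : SimpleHypergraph α) {j : ℕ} (B : Fin j → H.BouquetOf) : Prop :=
  (∀ p q : Fin j, p ≠ q → ∀ E ∈ (B p).edges, ∀ f ∈ (B q).flowers, f ∉ E) ∧
  H.Indep (famVerts B \ famFlowers B)

/-- `d'_H`: the maximum of `|E(𝓑)|` over semi-strongly disjoint sets of bouquets. -/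
noncomputable def dPrime (H : SimpleHypergraph α) : ℕ :=
  sSup {n : ℕ | ∃ (j : ℕ) (B : Fin j → H.BouquetOf), H.SSD B ∧ n = (famEdges B).card}

end SimpleHypergraph

namespace SimpleHypergraph

variable {α : Type*} [DecidableEq α] {H : SimpleHypergraph α}

theorem BouquetOf.flower_mem (b : H.BouquetOf) {E : Finset α} (hE : E ∈ b.edges) :
    b.flower E ∈ E :=
  (b.flower_spec E hE E hE).2 rfl

def BouquetOf.single {E : Finset α} {v : α} (hE : E ∈ H.edges) (hv : v ∈ E) :
    H.BouquetOf where
  edges := {E}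
  edges_nonempty := singleton_nonempty E
  subset := singleton_subset_iff.2 hE
  core := ⟨v, fun F hF => mem_singleton.1 hF ▸ hv⟩
  flower _ := v
  flower_spec F hF G hG := by
    rw [mem_singleton.1 hF, mem_singleton.1 hG]
    simpa using hv

section single

variable {E : Finset α} {v : α} (hE : E ∈ H.edges) (hv : v ∈ E)

@[simp]
theorem BouquetOf.single_edges : (BouquetOf.single hE hv).edges = {E} := rfl

@[simp]
theorem BouquetOf.single_flowers : (BouquetOf.single hE hv).flowers = {v} := by
  simp [BouquetOf.single, BouquetOf.flowers]

@[simp]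
theorem BouquetOf.single_verts : (BouquetOf.single hE hv).verts = E := by
  simp [BouquetOf.single, BouquetOf.verts]

end single

section family

variable {j : ℕ} {B : Fin j → H.BouquetOf}

theorem mem_famEdges {E : Finset α} : E ∈ famEdges B ↔ ∃ i, E ∈ (B i).edges := by
  simp [famEdges, mem_sup]

theorem mem_famFlowers {x : α} : x ∈ famFlowers B ↔ ∃ i, x ∈ (B i).flowers := by
  simp [famFlowers, mem_sup]

theorem mem_famVerts {x : α} : x ∈ famVerts B ↔ ∃ i, x ∈ (B i).verts := by
  simp [famVerts, mem_sup]

theorem subset_famVerts {i : Fin j} {E : Finset α} (hE : E ∈ (B i).edges) :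
    E ⊆ famVerts B := fun _ hx =>
  mem_famVerts.2 ⟨i, mem_sup.2 ⟨E, hE, hx⟩⟩

theorem flower_mem_famFlowers {i : Fin j} {E : Finset α} (hE : E ∈ (B i).edges) :
    (B i).flower E ∈ famFlowers B :=
  mem_famFlowers.2 ⟨i, mem_image_of_mem _ hE⟩

variable (B) (b : H.BouquetOf)

theorem famEdges_snoc :
    famEdges (Fin.snoc B b : Fin (j + 1) → H.BouquetOf) = famEdges B ∪ b.edges := by
  ext; simp [mem_famEdges, Fin.exists_fin_succ']

theorem famFlowers_snoc :
    famFlowers (Fin.snoc B b : Fin (j + 1) → H.BouquetOf) = famFlowers B ∪ b.flowers := by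
  ext; simp [mem_famFlowers, Fin.exists_fin_succ']

theorem famVerts_snoc :
    famVerts (Fin.snoc B b : Fin (j + 1) → H.BouquetOf) = famVerts B ∪ b.verts := by
  ext; simp [mem_famVerts, Fin.exists_fin_succ']

end family

theorem IsCover.indep_sdiff {C : Finset α} (hC : H.IsCover C) (A : Finset α) :
    H.Indep (A \ C) := fun E hE hEA =>
  let ⟨_, hvE, hvC⟩ := hC E hE
  (mem_sdiff.1 (hEA hvE)).2 hvC

theorem IsMinCover.exists_private_edge {C : Finset α} (hC : H.IsMinCover C) {v : α}
    (hv : v ∈ C) : ∃ E ∈ H.edges, v ∈ E ∧ ∀ w ∈ E, w ∈ C → w = v := by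
  have hnot : ¬ H.IsCover (C.erase v) := hC.2 _ (erase_ssubset hv)
  simp only [IsCover, not_forall, not_exists, not_and, mem_erase] at hnot
  obtain ⟨E, hE, hEv⟩ := hnot
  have hprivate : ∀ w ∈ E, w ∈ C → w = v := fun w hw hwC =>
    by_contra fun h => hEv w hw h hwC
  obtain ⟨w, hwE, hwC⟩ := hC.1 E hE
  exact ⟨E, hE, hprivate w hwE hwC ▸ hwE, hprivate⟩

namespace SSD

variable {j : ℕ} {B : Fin j → H.BouquetOf}

theorem notMem_edges (hB : H.SSD B) {p q : Fin j} (hpq : p ≠ q) {E : Finset α}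
    (hE : E ∈ (B p).edges) : E ∉ (B q).edges := fun hEq =>
  hB.1 p q hpq E hE _ (mem_image_of_mem _ hEq) ((B q).flower_mem hEq)

theorem eq_flower_of_mem (hB : H.SSD B) {p : Fin j} {E : Finset α} (hE : E ∈ (B p).edges)
    {x : α} (hxE : x ∈ E) (hxF : x ∈ famFlowers B) : x = (B p).flower E := by
  obtain ⟨q, hq⟩ := mem_famFlowers.1 hxF
  obtain ⟨E', hE', rfl⟩ := mem_image.1 hq
  obtain rfl | hpq := eq_or_ne p q
  · rw [((B p).flower_spec E' hE' E hE).1 hxE]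
  · exact absurd hxE (hB.1 p q hpq E hE _ hq)

theorem card_famFlowers_le (hB : H.SSD B) : (famFlowers B).card ≤ (famEdges B).card :=
  calc (famFlowers B).card
      ≤ ∑ i, (B i).flowers.card := by
        rw [famFlowers, sup_eq_biUnion]; exact card_biUnion_le
    _ ≤ ∑ i, (B i).edges.card := sum_le_sum fun _ _ => card_image_le
    _ = (famEdges B).card := by
        rw [famEdges, sup_eq_biUnion, card_biUnion]
        exact fun p _ q _ hpq => disjoint_left.2 fun _ hE => hB.notMem_edges hpq hE

theorem isMinCover_famFlowers (hB : H.SSD B) (hC : H.IsCover (famFlowers B)) :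
    H.IsMinCover (famFlowers B) := by
  refine ⟨hC, fun D hD hDC => ?_⟩
  obtain ⟨f, hfF, hfD⟩ := exists_of_ssubset hD
  obtain ⟨p, hp⟩ := mem_famFlowers.1 hfF
  obtain ⟨E, hE, rfl⟩ := mem_image.1 hp
  obtain ⟨w, hwE, hwD⟩ := hDC E ((B p).subset hE)
  exact hfD (hB.eq_flower_of_mem hE hwE (hD.subset hwD) ▸ hwD)

theorem sdiff_famVerts_nonempty (hB : H.SSD B) {E : Finset α} (hE : E ∈ H.edges)
    (hEF : Disjoint E (famFlowers B)) : (E \ famVerts B).Nonempty := by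
  rw [nonempty_iff_ne_empty, Ne, sdiff_eq_empty_iff_subset]
  exact fun hEV => hB.2 E hE (subset_sdiff.2 ⟨hEV, hEF⟩)

theorem snoc (hB : H.SSD B) {b : H.BouquetOf}
    (hBb : ∀ E ∈ famEdges B, ∀ f ∈ b.flowers, f ∉ E)
    (hbB : ∀ E ∈ b.edges, ∀ f ∈ famFlowers B, f ∉ E)
    (hind : H.Indep ((famVerts B ∪ b.verts) \ (famFlowers B ∪ b.flowers))) :
    H.SSD (Fin.snoc B b : Fin (j + 1) → H.BouquetOf) := by
  refine ⟨fun p q hpq => ?_, by rwa [famVerts_snoc, famFlowers_snoc]⟩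
  induction p using Fin.lastCases <;> induction q using Fin.lastCases <;>
    simp only [Fin.snoc_castSucc, Fin.snoc_last]
  · exact absurd rfl hpq
  · exact fun E hE f hf => hbB E hE f (mem_famFlowers.2 ⟨_, hf⟩)
  · exact fun E hE => hBb E (mem_famEdges.2 ⟨_, hE⟩)
  · exact hB.1 _ _ (fun h => hpq (congrArg _ h))

theorem exists_snoc_of_not_isCover (hB : H.SSD B) (hC : ¬ H.IsCover (famFlowers B)) :
    ∃ b : H.BouquetOf, H.SSD (Fin.snoc B b : Fin (j + 1) → H.BouquetOf) ∧
      (famEdges B).card < (famEdges (Fin.snoc B b : Fin (j + 1) → H.BouquetOf)).card := by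
  set S := H.edges.filter fun E => Disjoint E (famFlowers B)
  have hS : S.Nonempty := by
    simp only [IsCover, not_forall, not_exists, not_and] at hC
    obtain ⟨E, hE, hEF⟩ := hC
    exact ⟨E, mem_filter.2 ⟨hE, disjoint_left.2 hEF⟩⟩
  -- Taking `E` with fewest vertices outside `V(B)` keeps `V \ F` independent after adding `E`.
  obtain ⟨E, hES, hEmin⟩ := S.exists_min_image (fun E => (E \ famVerts B).card) hS
  obtain ⟨hE, hEF⟩ := mem_filter.1 hES
  obtain ⟨v, hv⟩ := hB.sdiff_famVerts_nonempty hE hEF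
  obtain ⟨hvE, hvV⟩ := mem_sdiff.1 hv
  have hEB : E ∉ famEdges B := fun h =>
    let ⟨_, hi⟩ := mem_famEdges.1 h
    disjoint_left.1 hEF ((B _).flower_mem hi) (flower_mem_famFlowers hi)
  refine ⟨BouquetOf.single hE hvE, hB.snoc ?_ ?_ ?_, ?_⟩
  · simp only [BouquetOf.single_flowers, mem_singleton, forall_eq]
    intro E' hE' hvE'
    obtain ⟨_, hi⟩ := mem_famEdges.1 hE'
    exact hvV (subset_famVerts hi hvE')
  · simp only [BouquetOf.single_edges, mem_singleton, forall_eq]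
    exact fun f hf hfE => disjoint_left.1 hEF hfE hf
  · intro G hG hGsub
    simp only [BouquetOf.single_verts, BouquetOf.single_flowers] at hGsub
    have hGF : Disjoint G (famFlowers B) :=
      disjoint_left.2 fun w hw hwF => (mem_sdiff.1 (hGsub hw)).2 (mem_union_left _ hwF)
    have hGS : G ∈ S := mem_filter.2 ⟨hG, hGF⟩
    have hshrink : G \ famVerts B ⊆ (E \ famVerts B).erase v := by
      intro w hw
      obtain ⟨hwG, hwV⟩ := mem_sdiff.1 hw
      obtain ⟨hwVE, hwFv⟩ := mem_sdiff.1 (hGsub hwG)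
      have hwE : w ∈ E := (mem_union.1 hwVE).resolve_left hwV
      exact mem_erase.2 ⟨fun h => hwFv (mem_union_right _ (mem_singleton.2 h)),
        mem_sdiff.2 ⟨hwE, hwV⟩⟩
    have := card_le_card hshrink
    have := hEmin G hGS
    have := card_erase_lt_of_mem hv
    omega
  · rw [famEdges_snoc, BouquetOf.single_edges, union_singleton, card_insert_of_notMem hEB]
    exact Nat.lt_succ_self _

end SSD

theorem bddAbove_dPrime_set (H : SimpleHypergraph α) :
    BddAbove {n : ℕ | ∃ (j : ℕ) (B : Fin j → H.BouquetOf),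
      H.SSD B ∧ n = (famEdges B).card} := by
  refine ⟨H.edges.card, ?_⟩
  rintro _ ⟨j, B, -, rfl⟩
  exact card_le_card fun E hE => let ⟨i, hi⟩ := mem_famEdges.1 hE; (B i).subset hi

theorem card_famEdges_le_dPrime {j : ℕ} {B : Fin j → H.BouquetOf} (hB : H.SSD B) :
    (famEdges B).card ≤ H.dPrime :=
  le_csSup H.bddAbove_dPrime_set ⟨j, B, hB, rfl⟩

theorem card_le_dPrime_of_isMinCover {C : Finset α} (hC : H.IsMinCover C) :
    C.card ≤ H.dPrime := by
  choose! E hE hvE hprivate using fun v (hv : v ∈ C) => hC.exists_private_edge hv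
  let v : Fin C.card → α := fun i => C.equivFin.symm i
  have hvC : ∀ i, v i ∈ C := fun i => (C.equivFin.symm i).2
  let B : Fin C.card → H.BouquetOf := fun i =>
    BouquetOf.single (hE _ (hvC i)) (hvE _ (hvC i))
  have hBC : famFlowers B = C := by
    ext x
    simp only [mem_famFlowers, B, BouquetOf.single_flowers, mem_singleton]
    exact ⟨fun ⟨i, hi⟩ => hi ▸ hvC i, fun hx => ⟨C.equivFin ⟨x, hx⟩, by simp [v]⟩⟩
  have hB : H.SSD B := by
    refine ⟨fun p q hpq => ?_, by rw [hBC]; exact hC.1.indep_sdiff _⟩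
    simp only [B, BouquetOf.single_edges, BouquetOf.single_flowers, mem_singleton, forall_eq]
    intro hq
    exact hpq (C.equivFin.symm.injective (Subtype.ext (hprivate _ (hvC p) _ hq (hvC q))).symm)
  calc C.card = (famFlowers B).card := by rw [hBC]
    _ ≤ (famEdges B).card := hB.card_famFlowers_le
    _ ≤ H.dPrime := card_famEdges_le_dPrime hB

theorem alpha0'_le_dPrime (H : SimpleHypergraph α) : H.alpha0' ≤ H.dPrime :=
  csSup_le' fun _ ⟨_, hC, hn⟩ => hn ▸ card_le_dPrime_of_isMinCover hC

theorem card_le_alpha0' {C : Finset α} (hC : H.IsMinCover C) : C.card ≤ H.alpha0' :=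
  le_csSup ⟨H.dPrime, fun _ ⟨_, hD, hn⟩ => hn ▸ card_le_dPrime_of_isMinCover hD⟩
    ⟨C, hC, rfl⟩

end SimpleHypergraph

open SimpleHypergraph in
/-- a semi-strongly disjoint set of bouquets with `|F(𝓑)| = d'_H`
has flower set a minimal vertex cover of maximum cardinality. -/
theorem stmt9 {α : Type*} [DecidableEq α] (H : SimpleHypergraph α)
    {j : ℕ} (B : Fin j → H.BouquetOf) (hB : H.SSD B)
    (hmax : (famFlowers B).card = H.dPrime) :
    H.IsMinCover (famFlowers B) ∧ (famFlowers B).card = H.alpha0' := by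
  have hFE := hB.card_famFlowers_le
  have hcover : H.IsCover (famFlowers B) := by
    by_contra hC
    obtain ⟨_, hB', hlt⟩ := hB.exists_snoc_of_not_isCover hC
    have := card_famEdges_le_dPrime hB'
    omega
  have hmin := hB.isMinCover_famFlowers hcover
  exact ⟨hmin, le_antisymm (card_le_alpha0' hmin) (hmax ▸ H.alpha0'_le_dPrime)⟩
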